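/- For m ≥ 0 and n ≥ m+3, there exists a family of n−m−1 pairwise vertex-disjoint m-dimensional subcubes of Q_n and two vertices x, y avoiding them such that every x–y path in Q_n avoiding all removed subcubes has length at least n+1. Hence D_f(Q_n; Q_m) ≥ n+1. -/

import Mathlib

open SimpleGraph

/-- The `n`-dimensional hypercube: vertices are `Fin n → Bool`,
adjacent iff Hamming distance is `1`. -/
def Q (n : ℕ) : SimpleGraph (Fin n → Bool) where
  Adj u v := hammingDist u v = 1
  symm := ⟨fun u v (h : hammingDist u v = 1) => by
    show hammingDist v u = 1; rw [hammingDist_comm]; exact h⟩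
  loopless := ⟨fun u (h : hammingDist u u = 1) => by simp [hammingDist_self] at h⟩

/-- Flip the `i`-th bit of `x`. -/
def flipBit {n : ℕ} (x : Fin n → Bool) (i : Fin n) : Fin n → Bool :=
  Function.update x i (!x i)

/-- `S` is a subcube of dimension exactly `m` (fixing `n - m` coordinates). -/
def IsSubcube {n : ℕ} (m : ℕ) (S : Set (Fin n → Bool)) : Prop :=
  ∃ A : Finset (Fin n), A.card = n - m ∧ ∃ p : Fin n → Bool,
    S = {x | ∀ i ∈ A, x i = p i}

/-- `S` is a subcube of dimension at most `m` (fixing at least `n - m` coordinates). -/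
def IsSubcubeLe {n : ℕ} (m : ℕ) (S : Set (Fin n → Bool)) : Prop :=
  ∃ A : Finset (Fin n), n - m ≤ A.card ∧ ∃ p : Fin n → Bool,
    S = {x | ∀ i ∈ A, x i = p i}

/-! Take `x = 0` and `y = 1⋯10`, at Hamming distance `n - 1`. A walk from `x` to `y` that leaves
the half-cube `{z | z (n-1) = 0}` has to flip the last bit twice, so it has length at least
`n + 1`. A walk inside the half-cube changes the number of ones among the coordinates
`m, …, n-2` by at most one per step, from `0` up to `n - m - 1`, so it passes through a vertex
with exactly one such one: that vertex lies in one of the removed subcubes. -/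

open Finset

section HammingDist

variable {ι : Type*} {β : ι → Type*} [Fintype ι] [DecidableEq ι] [∀ i, DecidableEq (β i)]

theorem hammingDist_update_add_one {x y : ∀ i, β i} {i : ι} (h : x i ≠ y i) :
    hammingDist (Function.update x i (y i)) y + 1 = hammingDist x y := by
  have hfilter : univ.filter (fun k => x k ≠ y k) =
      insert i (univ.filter fun k => Function.update x i (y i) k ≠ y k) := by
    ext k
    rcases eq_or_ne k i with rfl | hk <;> simp [*]
  rw [hammingDist, hammingDist, hfilter, card_insert_of_notMem (by simp)]

theorem hammingDist_add_two_le {u v w : ∀ i, β i} {i : ι} (huv : u i = v i) (hw : w i ≠ u i) :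
    hammingDist u v + 2 ≤ hammingDist u w + hammingDist w v := by
  set w' := Function.update w i (v i)
  have hu : hammingDist u w' + 1 = hammingDist u w := by
    rw [hammingDist_comm u, hammingDist_comm u, ← hammingDist_update_add_one hw, huv]
  have hv : hammingDist w' v + 1 = hammingDist w v := hammingDist_update_add_one (huv ▸ hw)
  have := hammingDist_triangle u w' v
  omega

theorem card_filter_le_card_filter_add_hammingDist (M : Finset ι) (a b : ι → Bool) :
    #{i ∈ M | a i = true} ≤ #{i ∈ M | b i = true} + hammingDist a b := by
  calc #{i ∈ M | a i = true}
      ≤ #({i ∈ M | b i = true} ∪ ({i | a i ≠ b i} : Finset ι)) := by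
        refine card_le_card fun i hi => ?_
        rw [mem_filter] at hi
        by_cases hab : a i = b i <;> simp_all
    _ ≤ _ := card_union_le _ _

end HammingDist

theorem SimpleGraph.Walk.exists_mem_support_eq {V : Type*} {G : SimpleGraph V} (g : V → ℕ)
    (hg : ∀ a b, G.Adj a b → g b ≤ g a + 1) {u v : V} (p : G.Walk u v) {c : ℕ}
    (hu : g u ≤ c) (hv : c ≤ g v) : ∃ w ∈ p.support, g w = c := by
  induction p with
  | nil => exact ⟨_, Walk.start_mem_support _, le_antisymm hu hv⟩
  | @cons a b _ hab q ih =>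
    rcases hu.eq_or_lt with rfl | hlt
    · exact ⟨a, q.cons hab |>.start_mem_support, rfl⟩
    · obtain ⟨w, hw, rfl⟩ := ih ((hg a b hab).trans hlt) hv
      exact ⟨w, List.mem_cons_of_mem _ hw, rfl⟩

variable {n : ℕ}

theorem hammingDist_le_length {u v : Fin n → Bool} (p : (Q n).Walk u v) :
    hammingDist u v ≤ p.length := by
  induction p with
  | nil => simp
  | @cons a b c hab q ih =>
    have : hammingDist a b = 1 := hab
    have := hammingDist_triangle a b c
    rw [Walk.length_cons]; omega

theorem add_hammingDist_le_length {u v w : Fin n → Bool} (p : (Q n).Walk u v)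
    (hw : w ∈ p.support) : hammingDist u w + hammingDist w v ≤ p.length := by
  rw [← p.take_spec hw, Walk.length_append]
  exact add_le_add (hammingDist_le_length _) (hammingDist_le_length _)

/-- With `A = insert l M` these are the subcubes `(Q_m, t_j)` of the construction: `t = 0` in the
factor cube on the coordinates `M`, its neighbours `t_j = e_j` (`j ∈ M`), half-cube `z l = 0`. -/
def unitSubcube (A : Finset (Fin n)) (j : Fin n) : Set (Fin n → Bool) :=
  {z | ∀ i ∈ A, z i = decide (i = j)}

theorem unitSubcube_injOn (A : Finset (Fin n)) : Set.InjOn (unitSubcube A) A := by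
  intro j hj j' _ h
  have : (fun i => decide (i = j)) ∈ unitSubcube A j' := h ▸ fun _ _ => rfl
  simpa using this j hj

theorem disjoint_unitSubcube {A : Finset (Fin n)} {j j' : Fin n} (hj : j ∈ A) (h : j ≠ j') :
    Disjoint (unitSubcube A j) (unitSubcube A j') :=
  Set.disjoint_left.2 fun _ hz hz' => by simpa [h] using (hz j hj).symm.trans (hz' j hj)

theorem notMem_unitSubcube_of_apply_eq_false {A : Finset (Fin n)} {j : Fin n} {z : Fin n → Bool}
    (hj : j ∈ A) (hz : z j = false) : z ∉ unitSubcube A j :=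
  fun h => by simpa [hz] using h j hj

theorem notMem_unitSubcube_of_apply_eq_true {A : Finset (Fin n)} {i j : Fin n}
    {z : Fin n → Bool} (hi : i ∈ A) (hij : i ≠ j) (hz : z i = true) : z ∉ unitSubcube A j :=
  fun h => by simpa [hz, hij] using h i hi

theorem mem_unitSubcube_insert {M : Finset (Fin n)} {l j : Fin n} {z : Fin n → Bool}
    (hjl : j ≠ l) (hzl : z l = false) (hz : {i ∈ M | z i = true} = {j}) :
    z ∈ unitSubcube (insert l M) j := by
  intro i hi
  rcases mem_insert.1 hi with rfl | hiM
  · simp [hzl, hjl.symm]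
  · rw [Bool.eq_iff_iff, decide_eq_true_iff, ← mem_singleton (a := j), ← hz, mem_filter]
    exact (and_iff_right hiM).symm

theorem add_one_le_length_of_mem_support_apply_eq_true {l : Fin n} {w : Fin n → Bool}
    (p : (Q n).Walk (fun _ => false) (fun i => decide (i ≠ l))) (hw : w ∈ p.support)
    (hwl : w l = true) : n + 1 ≤ p.length := by
  have hxy : hammingDist (fun _ => false) (fun i : Fin n => decide (i ≠ l)) = n - 1 := by
    simp [hammingDist, filter_ne', card_erase_of_mem]
  have := hammingDist_add_two_le (u := fun _ => false) (v := fun i => decide (i ≠ l))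
    (w := w) (i := l) (by simp) (by simp [hwl])
  have := add_hammingDist_le_length p hw
  have := l.pos
  omega

theorem exists_mem_support_mem_unitSubcube {M : Finset (Fin n)} {l : Fin n} (hlM : l ∉ M)
    {v : Fin n → Bool} (p : (Q n).Walk (fun _ => false) v) (hv : ∃ i ∈ M, v i = true)
    (hl : ∀ w ∈ p.support, w l = false) :
    ∃ w ∈ p.support, ∃ j ∈ M, w ∈ unitSubcube (insert l M) j := by
  have hstep (a b : Fin n → Bool) (hab : (Q n).Adj a b) :
      #{i ∈ M | b i = true} ≤ #{i ∈ M | a i = true} + 1 :=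
    (card_filter_le_card_filter_add_hammingDist M b a).trans_eq
      (by rw [show hammingDist b a = 1 from hab.symm])
  obtain ⟨w, hw, hw1⟩ := p.exists_mem_support_eq _ hstep (c := 1) (by simp)
    (card_pos.2 (filter_nonempty_iff.2 hv))
  obtain ⟨j, hj⟩ := card_eq_one.1 hw1
  have hjM : j ∈ M := (mem_filter.1 (hj ▸ mem_singleton_self j)).1
  exact ⟨w, hw, j, hjM, mem_unitSubcube_insert (ne_of_mem_of_not_mem hjM hlM) (hl w hw) hj⟩

theorem add_one_le_length_of_forall_mem_support_notMem_unitSubcube {M : Finset (Fin n)} {l : Fin n}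
    (hlM : l ∉ M) (hM : M.Nonempty)
    (p : (Q n).Walk (fun _ => false) (fun i => decide (i ≠ l)))
    (hp : ∀ w ∈ p.support, ∀ j ∈ M, w ∉ unitSubcube (insert l M) j) : n + 1 ≤ p.length := by
  by_cases hl : ∃ w ∈ p.support, w l = true
  · obtain ⟨w, hw, hwl⟩ := hl
    exact add_one_le_length_of_mem_support_apply_eq_true p hw hwl
  · obtain ⟨i, hi⟩ := hM
    have hv : ∃ i ∈ M, decide (i ≠ l) = true :=
      ⟨i, hi, by simpa using ne_of_mem_of_not_mem hi hlM⟩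
    obtain ⟨w, hw, j, hj, hwj⟩ := exists_mem_support_mem_unitSubcube hlM p hv (by simpa using hl)
    exact (hp w hw j hj hwj).elim

theorem subcube_structure_lower_bound (n m : ℕ) (h : m + 3 ≤ n) :
    ∃ F : Finset (Set (Fin n → Bool)), F.card = n - m - 1 ∧
      (∀ S ∈ F, IsSubcube m S) ∧
      (∀ S ∈ F, ∀ T ∈ F, S ≠ T → Disjoint S T) ∧
      ∃ x y : Fin n → Bool,
        x ∉ ⋃₀ (↑F : Set (Set (Fin n → Bool))) ∧
        y ∉ ⋃₀ (↑F : Set (Set (Fin n → Bool))) ∧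
        ∀ p : (Q n).Walk x y, p.IsPath →
          (∀ w ∈ p.support, w ∉ ⋃₀ (↑F : Set (Set (Fin n → Bool)))) →
          n + 1 ≤ p.length := by
  set l : Fin n := ⟨n - 1, by omega⟩
  set M : Finset (Fin n) := Ico ⟨m, by omega⟩ l
  have hlM : l ∉ M := by simp [M]
  have hM : #M = n - m - 1 := by simp [M, l]; omega
  set A := insert l M
  have hA : #A = n - m := by rw [card_insert_of_notMem hlM, hM]; omega
  have hF (z : Fin n → Bool) :
      z ∈ ⋃₀ ↑(M.image (unitSubcube A)) ↔ ∃ j ∈ M, z ∈ unitSubcube A j := by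
    simp
  refine ⟨M.image (unitSubcube A), ?_, forall_mem_image.2 fun j _ => ⟨A, hA, _, rfl⟩, ?_,
    fun _ => false, fun i => decide (i ≠ l), ?_, ?_, ?_⟩
  · rw [card_image_of_injOn ((unitSubcube_injOn A).mono (by simp [A])), hM]
  · simp only [forall_mem_image]
    exact fun j hj j' _ hne => disjoint_unitSubcube (mem_insert_of_mem hj) (ne_of_apply_ne _ hne)
  · rw [hF]
    rintro ⟨j, hj, hx⟩
    exact notMem_unitSubcube_of_apply_eq_false (mem_insert_of_mem hj) rfl hx
  · rw [hF]
    rintro ⟨j, hj, hy⟩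
    obtain ⟨j', hj', hne⟩ := exists_mem_ne (by omega : 1 < #M) j
    exact notMem_unitSubcube_of_apply_eq_true (mem_insert_of_mem hj') hne
      (by simpa using ne_of_mem_of_not_mem hj' hlM) hy
  · intro p _ hp
    refine add_one_le_length_of_forall_mem_support_notMem_unitSubcube hlM (card_pos.1 (by omega)) p
      fun w hw j hj hwj => hp w hw ((hF w).2 ⟨j, hj, hwj⟩)
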